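/- Let α ∈ (1/2, 1) be a constant. There is n₀ ∈ ℕ such that for all n ≥ n₀ and all reals ε with 2^{−(2α−1)n/2} ≤ ε ≤ 1/6: every deterministic non-adaptive SSSQ algorithm (g, T) with advantage at least 2/3 has query complexity Σ_{i=1}^d |T_i| ≥ n^{3/2} / (ε · (log₂ n)³ · (log₂(n/ε))²). -/

import Mathlib

/-!
Averaging the oracle over the hidden set `A` makes the columns of the response independent: the
column of an element `j` (its bits in all queries) is zero with probability `1 - p`, and with
probability `p` it is a vector of independent `ε/√n`-coins on the queries containing `j`. So the
χ²-divergence between the response laws for `p = 1/2` and `p = 1/2 + δ`, `δ = log₂ n / √n`,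
tensorizes over the columns. A direct computation bounds the factor of `j` by
`1 + 6 δ² (ε/√n) t_j`, where `t_j` is the number of queries containing `j`, so the divergence is
at most `exp (6 δ² (ε/√n) ∑ |T_i|) - 1`. An advantage `2/3` forces total variation distance
`2/3`, hence χ²-divergence `16/9`; as `1 + 16/9 > e` this gives `6 δ² (ε/√n) ∑ |T_i| ≥ 1`, that is
`∑ |T_i| ≥ n^{3/2} / (6 ε log₂² n)`, which is more than claimed as soon as `log₂ n ≥ 2`.
-/

open Finset

/-- Probability that the SSSQ oracle, on hidden set `A ⊆ [m]` and set queries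
`T = (T_1, …, T_d)`, returns the response `v` (where `v i j` is only meaningful — and
forced to be `false` — when `j ∉ T i`; for `j ∈ T i` the bit is `0` if `j ∉ A`, and is
`1` with probability `ρ` if `j ∈ A`, all bits independent). -/
noncomputable def sssqRespP {m d : ℕ} (T : Fin d → Finset (Fin m)) (ρ : ℝ)
    (A : Finset (Fin m)) (v : Fin d → Fin m → Bool) : ℝ :=
  ∏ i : Fin d, ∏ j : Fin m,
    if j ∈ T i then
      (if j ∈ A then (if v i j then ρ else 1 - ρ) else (if v i j then 0 else 1))
    else (if v i j then 0 else 1)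

/-- Probability that the deterministic non-adaptive SSSQ algorithm `(g, T)` answers
"yes" (`true`) when the hidden set `A ⊆ [m]` is drawn by including each element of `[m]`
independently with probability `pr`, and each response bit for `j ∈ T i ∩ A` is `1`
with probability `ρ`. -/
noncomputable def sssqYesP (m d : ℕ) (T : Fin d → Finset (Fin m)) (ρ pr : ℝ)
    (g : (Fin d → Fin m → Bool) → Bool) : ℝ :=
  ∑ A : Finset (Fin m), (pr ^ A.card * (1 - pr) ^ (m - A.card)) *
    ∑ v : Fin d → Fin m → Bool,
      (if g v then 1 else 0) * sssqRespP T ρ A v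

/-- The advantage of the SSSQ algorithm `(g, T)` with parameters `n`, `m`, `ε`:
the probability it answers "yes" under `A ∼ A_yes` (rate `1/2`) minus the probability
it answers "yes" under `A ∼ A_no` (rate `1/2 + (log₂ n)/√n`); response bits for
elements of `A` are `1` with probability `ε/√n`. -/
noncomputable def sssqAdv (n m d : ℕ) (T : Fin d → Finset (Fin m)) (ε : ℝ)
    (g : (Fin d → Fin m → Bool) → Bool) : ℝ :=
  sssqYesP m d T (ε / Real.sqrt n) (1 / 2) g -
    sssqYesP m d T (ε / Real.sqrt n) (1 / 2 + Real.logb 2 n / Real.sqrt n) g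

section Distances

variable {N : Type*} [Fintype N]

theorem sum_boole_mul_sub_le_half_sum_abs (P Q : N → ℝ) (g : N → Bool)
    (hP : ∑ v, P v = 1) (hQ : ∑ v, Q v = 1) :
    ∑ v, (if g v then 1 else 0) * (P v - Q v) ≤ (∑ v, |P v - Q v|) / 2 := by
  have hpt : ∀ v, (if g v then (1 : ℝ) else 0) * (P v - Q v) ≤
      (|P v - Q v| + (P v - Q v)) / 2 := by
    intro v
    split_ifs
    · linarith [le_abs_self (P v - Q v)]
    · linarith [neg_abs_le (P v - Q v)]
  calc ∑ v, (if g v then 1 else 0) * (P v - Q v)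
      ≤ ∑ v, (|P v - Q v| + (P v - Q v)) / 2 := sum_le_sum fun v _ => hpt v
    _ = (∑ v, |P v - Q v|) / 2 := by
        rw [← sum_div, sum_add_distrib, sum_sub_distrib, hP, hQ, sub_self, add_zero]

theorem sq_sum_abs_sub_le_sum_sq_div_sub_one {P Q : N → ℝ}
    (hP : ∑ v, P v = 1) (hQ : ∑ v, Q v = 1) (hQ0 : ∀ v, 0 ≤ Q v)
    (hPQ : ∀ v, Q v = 0 → P v = 0) :
    (∑ v, |P v - Q v|) ^ 2 ≤ ∑ v, P v ^ 2 / Q v - 1 := by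
  classical
  have hsupp : ∀ f : N → ℝ, (∀ v, Q v = 0 → f v = 0) →
      ∑ v with Q v ≠ 0, f v = ∑ v, f v := fun f hf =>
    sum_filter_of_ne fun v _ hv h => hv (hf v h)
  have hpt : ∀ v, |P v - Q v| ^ 2 / Q v = P v ^ 2 / Q v - 2 * P v + Q v := by
    intro v
    rcases eq_or_ne (Q v) 0 with h | h
    · simp [h, hPQ v h]
    · field_simp
      rw [sq_abs]
      ring
  calc (∑ v, |P v - Q v|) ^ 2
      = (∑ v with Q v ≠ 0, |P v - Q v|) ^ 2 / ∑ v with Q v ≠ 0, Q v := by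
        rw [hsupp _ fun v h => by simp [h, hPQ v h], hsupp Q fun v h => h, hQ, div_one]
    _ ≤ ∑ v with Q v ≠ 0, |P v - Q v| ^ 2 / Q v :=
        sq_sum_div_le_sum_sq_div _ _ fun v hv => (hQ0 v).lt_of_ne' (mem_filter.mp hv).2
    _ = ∑ v, (P v ^ 2 / Q v - 2 * P v + Q v) := by
        rw [hsupp _ fun v h => by simp [h]]
        exact sum_congr rfl fun v _ => hpt v
    _ = ∑ v, P v ^ 2 / Q v - 1 := by
        rw [sum_add_distrib, sum_sub_distrib, ← mul_sum, hP, hQ]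
        ring

end Distances

theorem sum_prod_columns {ι κ β : Type*} [Fintype ι] [DecidableEq ι] [Fintype κ]
    [DecidableEq κ] [Fintype β] (F : κ → (ι → β) → ℝ) :
    ∑ v : ι → κ → β, ∏ j, F j (fun i => v i j) = ∏ j, ∑ u : ι → β, F j u := by
  rw [Fintype.prod_sum]
  exact Fintype.sum_equiv (Equiv.piComm fun _ _ => β) _ _ fun v => rfl

theorem sum_pow_mul_pow_mul_prod_ite {κ : Type*} [Fintype κ] [DecidableEq κ] (p : ℝ)
    (a b : κ → ℝ) :
    ∑ A : Finset κ, (p ^ #A * (1 - p) ^ (Fintype.card κ - #A)) *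
        ∏ j, (if j ∈ A then a j else b j) = ∏ j, (p * a j + (1 - p) * b j) := by
  rw [Fintype.prod_add]
  refine sum_congr rfl fun A _ => ?_
  rw [prod_ite, prod_mul_distrib, prod_mul_distrib, prod_const, prod_const, card_compl]
  simp only [filter_mem_eq_inter, univ_inter, filter_not, ← compl_eq_univ_sdiff]
  ring

section PointMix

variable {N : Type*} [DecidableEq N]

noncomputable def pointMix (p : ℝ) (W : N → ℝ) (o u : N) : ℝ :=
  p * W u + (1 - p) * if u = o then 1 else 0

variable {W : N → ℝ} {o : N}

theorem sum_pointMix [Fintype N] (p : ℝ) (hW : ∑ u, W u = 1) :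
    ∑ u, pointMix p W o u = 1 := by
  simp [pointMix, sum_add_distrib, ← mul_sum, hW]

theorem pointMix_nonneg {p : ℝ} (hW : ∀ u, 0 ≤ W u) (hp0 : 0 ≤ p) (hp1 : p ≤ 1) (u : N) :
    0 ≤ pointMix p W o u := by
  unfold pointMix
  have := hW u
  split_ifs <;> nlinarith

theorem pointMix_eq_zero_of_eq_zero {p p' : ℝ} (hW : ∀ u, 0 ≤ W u) (hp0 : 0 < p')
    (hp1 : p' < 1) {u : N} (h : pointMix p' W o u = 0) : pointMix p W o u = 0 := by
  unfold pointMix at h ⊢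
  have := hW u
  split_ifs at h ⊢
  · nlinarith
  · simp [(mul_eq_zero.mp (by simpa using h)).resolve_left hp0.ne']

theorem sum_sq_div_pointMix_le [Fintype N] {δ : ℝ} (hW0 : ∀ u, 0 ≤ W u) (hW1 : ∑ u, W u = 1)
    (hδ0 : 0 < δ) (hδ1 : δ ≤ 1 / 4) :
    ∑ u, pointMix (1 / 2) W o u ^ 2 / pointMix (1 / 2 + δ) W o u ≤
      1 + 6 * δ ^ 2 * (1 - W o) := by
  have hrest : ∀ u ∈ univ.erase o,
      pointMix (1 / 2) W o u ^ 2 / pointMix (1 / 2 + δ) W o u = 1 / 4 / (1 / 2 + δ) * W u := by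
    intro u hu
    simp only [pointMix, if_neg (ne_of_mem_erase hu), mul_zero, add_zero]
    rcases eq_or_ne (W u) 0 with h | h
    · simp [h]
    · field_simp
      ring
  rw [← add_sum_erase _ _ (mem_univ o), sum_congr rfl hrest, ← mul_sum,
    sum_erase_eq_sub (mem_univ o), hW1]
  set q := W o
  have hq0 : 0 ≤ q := hW0 o
  have hq1 : q ≤ 1 := hW1 ▸ single_le_sum (fun u _ => hW0 u) (mem_univ o)
  have hD : 0 < (1 / 2 + δ) * q + (1 / 2 - δ) := by nlinarith
  have hterm_o : (1 / 2 * q + 1 / 2) ^ 2 / ((1 / 2 + δ) * q + (1 / 2 - δ)) ≤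
      q / 2 + 1 / 2 + δ * (1 - q) + 4 * δ ^ 2 * (1 - q) := by
    rw [div_le_iff₀ hD]
    nlinarith [mul_nonneg (mul_nonneg (sq_nonneg δ) (by linarith : (0 : ℝ) ≤ 1 - q))
      (by nlinarith : (0 : ℝ) ≤ 4 * ((1 / 2 + δ) * q + (1 / 2 - δ)) - (1 - q))]
  have hterm_rest : 1 / 4 / (1 / 2 + δ) ≤ 1 / 2 - δ + 2 * δ ^ 2 := by
    rw [div_le_iff₀ (by linarith)]
    nlinarith [pow_pos hδ0 3]
  have hmix_o : ∀ p, pointMix p W o o = p * q + (1 - p) := fun p => by simp [pointMix, q]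
  rw [hmix_o, hmix_o, show (1 : ℝ) - 1 / 2 = 1 / 2 by norm_num,
    show 1 - (1 / 2 + δ) = 1 / 2 - δ by ring]
  nlinarith [mul_le_mul_of_nonneg_right hterm_rest (by linarith : (0 : ℝ) ≤ 1 - q)]

end PointMix

noncomputable def bernoulliWeight (r : ℝ) (b : Bool) : ℝ := if b then r else 1 - r

theorem bernoulliWeight_nonneg {r : ℝ} (hr0 : 0 ≤ r) (hr1 : r ≤ 1) (b : Bool) :
    0 ≤ bernoulliWeight r b := by
  cases b <;> simp [bernoulliWeight] <;> linarith

section BernoulliVector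

variable {ι : Type*} [Fintype ι]

theorem sum_prod_bernoulliWeight [DecidableEq ι] (r : ι → ℝ) :
    ∑ u : ι → Bool, ∏ i, bernoulliWeight (r i) (u i) = 1 := by
  rw [← Fintype.prod_sum]
  simp [bernoulliWeight]

theorem prod_bernoulliWeight_zero (u : ι → Bool) :
    ∏ i, bernoulliWeight 0 (u i) = if u = fun _ => false then 1 else 0 := by
  split_ifs with h
  · simp [h, bernoulliWeight]
  · obtain ⟨i, hi⟩ : ∃ i, u i = true := by
      by_contra! h'
      exact h (funext fun i => by simpa using h' i)
    exact prod_eq_zero (mem_univ i) (by simp [bernoulliWeight, hi])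

end BernoulliVector

theorem sum_card_filter_mem_eq_sum_card {ι κ : Type*} [Fintype ι] [Fintype κ]
    [DecidableEq κ] (T : ι → Finset κ) :
    ∑ j, #{i | j ∈ T i} = ∑ i, #(T i) := by
  have := sum_card_bipartiteAbove_eq_sum_card_bipartiteBelow (s := univ) (t := univ)
    (r := fun i j => j ∈ T i)
  simp only [bipartiteAbove, bipartiteBelow, filter_mem_eq_inter, univ_inter] at this
  exact this.symm

namespace SSSQ

variable {m d : ℕ} (T : Fin d → Finset (Fin m))

/-- The law of column `j` of the response when `j ∈ A` and the coins have bias `r`. For `r = 0`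
it is the point mass at the zero column, the law of the column when `j ∉ A`. -/
noncomputable def columnLaw (r : ℝ) (j : Fin m) (u : Fin d → Bool) : ℝ :=
  ∏ i, bernoulliWeight (if j ∈ T i then r else 0) (u i)

theorem sssqRespP_eq_prod_columnLaw (ρ : ℝ) (A : Finset (Fin m)) (v : Fin d → Fin m → Bool) :
    sssqRespP T ρ A v = ∏ j, columnLaw T (if j ∈ A then ρ else 0) j (fun i => v i j) := by
  rw [sssqRespP, prod_comm]
  refine prod_congr rfl fun j _ => prod_congr rfl fun i _ => ?_
  by_cases hT : j ∈ T i <;> by_cases hA : j ∈ A <;> simp [hT, hA, bernoulliWeight]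

theorem columnLaw_nonneg {r : ℝ} (hr0 : 0 ≤ r) (hr1 : r ≤ 1) (j : Fin m) (u : Fin d → Bool) :
    0 ≤ columnLaw T r j u :=
  prod_nonneg fun i _ => bernoulliWeight_nonneg (by split_ifs <;> linarith)
    (by split_ifs <;> linarith) _

theorem sum_columnLaw (r : ℝ) (j : Fin m) : ∑ u, columnLaw T r j u = 1 :=
  sum_prod_bernoulliWeight _

theorem columnLaw_false (r : ℝ) (j : Fin m) :
    columnLaw T r j (fun _ => false) = (1 - r) ^ #{i | j ∈ T i} := by
  have h : ∀ i, bernoulliWeight (if j ∈ T i then r else 0) false =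
      if j ∈ T i then 1 - r else 1 :=
    fun i => by split_ifs <;> simp [bernoulliWeight]
  simp only [columnLaw, h, prod_ite, prod_const, one_pow, mul_one]

theorem columnLaw_zero (j : Fin m) (u : Fin d → Bool) :
    columnLaw T 0 j u = if u = fun _ => false then 1 else 0 := by
  simp [columnLaw, prod_bernoulliWeight_zero]

noncomputable def responseLaw (ρ p : ℝ) (v : Fin d → Fin m → Bool) : ℝ :=
  ∏ j, pointMix p (columnLaw T ρ j) (fun _ => false) (fun i => v i j)

theorem sum_prior_mul_sssqRespP (ρ p : ℝ) (v : Fin d → Fin m → Bool) :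
    ∑ A : Finset (Fin m), (p ^ #A * (1 - p) ^ (m - #A)) * sssqRespP T ρ A v =
      responseLaw T ρ p v := by
  calc ∑ A : Finset (Fin m), (p ^ #A * (1 - p) ^ (m - #A)) * sssqRespP T ρ A v
      = ∑ A : Finset (Fin m), (p ^ #A * (1 - p) ^ (m - #A)) * ∏ j, (if j ∈ A
          then columnLaw T ρ j (fun i => v i j) else columnLaw T 0 j (fun i => v i j)) := by
        refine sum_congr rfl fun A _ => ?_
        rw [sssqRespP_eq_prod_columnLaw]
        congr 1
        exact prod_congr rfl fun j _ => by split_ifs <;> rfl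
    _ = responseLaw T ρ p v := by
        have h := sum_pow_mul_pow_mul_prod_ite p (fun j => columnLaw T ρ j (fun i => v i j))
          (fun j => columnLaw T 0 j (fun i => v i j))
        rw [Fintype.card_fin] at h
        rw [h]
        simp only [responseLaw, pointMix, columnLaw_zero]

theorem sssqYesP_eq_sum_responseLaw (ρ p : ℝ) (g : (Fin d → Fin m → Bool) → Bool) :
    sssqYesP m d T ρ p g = ∑ v, (if g v then 1 else 0) * responseLaw T ρ p v := by
  simp_rw [sssqYesP, mul_sum]
  rw [sum_comm]
  refine sum_congr rfl fun v _ => ?_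
  rw [← sum_prior_mul_sssqRespP, mul_sum]
  exact sum_congr rfl fun A _ => by ring

theorem sum_responseLaw (ρ p : ℝ) : ∑ v, responseLaw T ρ p v = 1 := by
  unfold responseLaw
  rw [sum_prod_columns]
  exact prod_eq_one fun j _ => sum_pointMix p (sum_columnLaw T ρ j)

variable {T}

theorem responseLaw_nonneg {ρ p : ℝ} (hρ0 : 0 ≤ ρ) (hρ1 : ρ ≤ 1) (hp0 : 0 ≤ p) (hp1 : p ≤ 1)
    (v : Fin d → Fin m → Bool) : 0 ≤ responseLaw T ρ p v :=
  prod_nonneg fun j _ => pointMix_nonneg (columnLaw_nonneg T hρ0 hρ1 j) hp0 hp1 _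

theorem responseLaw_eq_zero_of_eq_zero {ρ p p' : ℝ} (hρ0 : 0 ≤ ρ) (hρ1 : ρ ≤ 1) (hp0 : 0 < p')
    (hp1 : p' < 1) {v : Fin d → Fin m → Bool} (h : responseLaw T ρ p' v = 0) :
    responseLaw T ρ p v = 0 := by
  obtain ⟨j, -, hj⟩ := prod_eq_zero_iff.mp h
  exact prod_eq_zero (mem_univ j)
    (pointMix_eq_zero_of_eq_zero (columnLaw_nonneg T hρ0 hρ1 j) hp0 hp1 hj)

theorem sum_sq_div_responseLaw_le {ρ δ : ℝ} (hρ0 : 0 ≤ ρ) (hρ1 : ρ ≤ 1) (hδ0 : 0 < δ)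
    (hδ1 : δ ≤ 1 / 4) :
    ∑ v, responseLaw T ρ (1 / 2) v ^ 2 / responseLaw T ρ (1 / 2 + δ) v ≤
      Real.exp (6 * δ ^ 2 * ρ * ∑ i, (#(T i) : ℝ)) := by
  have hcol : ∀ j, ∑ u, pointMix (1 / 2) (columnLaw T ρ j) (fun _ => false) u ^ 2 /
      pointMix (1 / 2 + δ) (columnLaw T ρ j) (fun _ => false) u ≤
        Real.exp (6 * δ ^ 2 * ρ * #{i | j ∈ T i}) := by
    intro j
    have hbernoulli : 1 - (1 - ρ) ^ #{i | j ∈ T i} ≤ ρ * #{i | j ∈ T i} := by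
      linarith [one_add_mul_sub_le_pow (by linarith : -1 ≤ 1 - ρ) #{i | j ∈ T i}]
    calc _ ≤ 1 + 6 * δ ^ 2 * (1 - columnLaw T ρ j (fun _ => false)) :=
          sum_sq_div_pointMix_le (columnLaw_nonneg T hρ0 hρ1 j) (sum_columnLaw T ρ j) hδ0 hδ1
      _ ≤ 6 * δ ^ 2 * ρ * #{i | j ∈ T i} + 1 := by
          rw [columnLaw_false]
          nlinarith [mul_le_mul_of_nonneg_left hbernoulli (sq_nonneg δ)]
      _ ≤ _ := Real.add_one_le_exp _
  calc ∑ v, responseLaw T ρ (1 / 2) v ^ 2 / responseLaw T ρ (1 / 2 + δ) v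
      = ∏ j, ∑ u, pointMix (1 / 2) (columnLaw T ρ j) (fun _ => false) u ^ 2 /
          pointMix (1 / 2 + δ) (columnLaw T ρ j) (fun _ => false) u := by
        simp_rw [responseLaw, ← prod_pow, ← prod_div_distrib]
        exact sum_prod_columns fun j u =>
          pointMix (1 / 2) (columnLaw T ρ j) (fun _ => false) u ^ 2 /
            pointMix (1 / 2 + δ) (columnLaw T ρ j) (fun _ => false) u
    _ ≤ ∏ j, Real.exp (6 * δ ^ 2 * ρ * #{i | j ∈ T i}) :=
        prod_le_prod (fun j _ => sum_nonneg fun u _ => div_nonneg (sq_nonneg _)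
          (pointMix_nonneg (columnLaw_nonneg T hρ0 hρ1 j) (by linarith) (by linarith) u))
          fun j _ => hcol j
    _ = Real.exp (6 * δ ^ 2 * ρ * ∑ i, (#(T i) : ℝ)) := by
        rw [← Real.exp_sum, ← mul_sum, ← Nat.cast_sum, ← Nat.cast_sum,
          sum_card_filter_mem_eq_sum_card]

theorem one_le_mul_sum_card_of_two_thirds_le {ρ δ : ℝ} (g : (Fin d → Fin m → Bool) → Bool)
    (hρ0 : 0 ≤ ρ) (hρ1 : ρ ≤ 1) (hδ0 : 0 < δ) (hδ1 : δ ≤ 1 / 4)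
    (hadv : 2 / 3 ≤ sssqYesP m d T ρ (1 / 2) g - sssqYesP m d T ρ (1 / 2 + δ) g) :
    1 ≤ 6 * δ ^ 2 * ρ * ∑ i, (#(T i) : ℝ) := by
  set P := responseLaw T ρ (1 / 2)
  set Q := responseLaw T ρ (1 / 2 + δ)
  have htv : 4 / 3 ≤ ∑ v, |P v - Q v| := by
    have := sum_boole_mul_sub_le_half_sum_abs P Q g (sum_responseLaw T ρ _)
      (sum_responseLaw T ρ _)
    rw [sssqYesP_eq_sum_responseLaw, sssqYesP_eq_sum_responseLaw, ← sum_sub_distrib] at hadv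
    simp_rw [← mul_sub] at hadv
    linarith
  have hp0 : (0 : ℝ) < 1 / 2 + δ := by linarith
  have hp1 : 1 / 2 + δ < (1 : ℝ) := by linarith
  have hchi := sq_sum_abs_sub_le_sum_sq_div_sub_one (P := P) (Q := Q) (sum_responseLaw T ρ _)
    (sum_responseLaw T ρ _) (responseLaw_nonneg hρ0 hρ1 hp0.le hp1.le)
    fun v => responseLaw_eq_zero_of_eq_zero hρ0 hρ1 hp0 hp1
  have hexp : Real.exp 1 < Real.exp (6 * δ ^ 2 * ρ * ∑ i, (#(T i) : ℝ)) :=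
    calc Real.exp 1 < 2.7182818286 := Real.exp_one_lt_d9
      _ < 1 + (4 / 3) ^ 2 := by norm_num
      _ ≤ _ := by nlinarith [sum_sq_div_responseLaw_le (T := T) hρ0 hρ1 hδ0 hδ1]
  exact (Real.exp_lt_exp.mp hexp).le

end SSSQ

section Asymptotics

open Filter Real

theorem eventually_four_mul_logb_le_sqrt : ∀ᶠ n : ℕ in atTop, 4 * logb 2 n ≤ √n := by
  have h := (isLittleO_log_rpow_atTop (r := 1 / 2) (by norm_num)).bound
    (c := log 2 / 4) (by positivity)
  filter_upwards [tendsto_natCast_atTop_atTop.eventually (h.and (eventually_ge_atTop 1))]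
    with n ⟨hlog, hn⟩
  rw [norm_of_nonneg (log_nonneg hn), norm_of_nonneg (by positivity), ← sqrt_eq_rpow] at hlog
  rw [logb, mul_div_assoc', div_le_iff₀ (log_pos one_lt_two)]
  linarith

theorem eventually_two_le_logb : ∀ᶠ n : ℕ in atTop, 2 ≤ logb 2 n :=
  tendsto_natCast_atTop_atTop.eventually ((tendsto_logb_atTop one_lt_two).eventually_ge_atTop 2)

theorem rpow_three_halves_div_le_of_one_le {n ε Q : ℝ} (hn : 0 < n) (hε0 : 0 < ε) (hε1 : ε ≤ 1)
    (hL : 2 ≤ logb 2 n) (hQ : 1 ≤ 6 * (logb 2 n / √n) ^ 2 * (ε / √n) * Q) :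
    n ^ ((3 : ℝ) / 2) / (ε * logb 2 n ^ 3 * logb 2 (n / ε) ^ 2) ≤ Q := by
  set L := logb 2 n
  set M := logb 2 (n / ε)
  have hLM : L ≤ M := logb_le_logb_of_le one_lt_two hn (le_div_self hn.le hε0 hε1)
  have hs : 0 < √n := sqrt_pos.mpr hn
  have hn32 : n ^ ((3 : ℝ) / 2) = √n ^ 3 := by
    rw [sqrt_eq_rpow, ← rpow_natCast, ← rpow_mul hn.le]
    norm_num
  have hL0 : 0 < L := by linarith
  have hQ' : √n ^ 3 ≤ 6 * L ^ 2 * ε * Q := by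
    rwa [show 6 * (L / √n) ^ 2 * (ε / √n) * Q = 6 * L ^ 2 * ε * Q / √n ^ 3 by field_simp,
      le_div_iff₀ (by positivity), one_mul] at hQ
  have hQ0 : 0 < Q := pos_of_mul_pos_right ((pow_pos hs 3).trans_le hQ') (by positivity)
  have hM0 : 0 < M := hL0.trans_le hLM
  rw [hn32, div_le_iff₀ (by positivity)]
  nlinarith [mul_le_mul_of_nonneg_left (show 6 ≤ L * M ^ 2 by nlinarith)
    (by positivity : 0 ≤ L ^ 2 * ε * Q)]

end Asymptotics

theorem stmt10_general (α : ℝ) :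
    ∃ n₀ : ℕ, ∀ (n : ℕ) (ε : ℝ), n₀ ≤ n →
      (2 : ℝ) ^ (-((2 * α - 1) * (n : ℝ) / 2)) ≤ ε → ε ≤ 1 / 6 →
      ∀ m : ℕ, m = ⌈2 * (1 - α) * (n : ℝ) + (1 - α) * Real.sqrt n * Real.logb 2 n⌉₊ →
      ∀ (d : ℕ) (T : Fin d → Finset (Fin m)) (g : (Fin d → Fin m → Bool) → Bool),
        2 / 3 ≤ sssqAdv n m d T ε g →
        (n : ℝ) ^ ((3 : ℝ) / 2) /
            (ε * (Real.logb 2 n) ^ 3 * (Real.logb 2 ((n : ℝ) / ε)) ^ 2) ≤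
          ∑ i : Fin d, ((T i).card : ℝ) := by
  obtain ⟨n₀, hn₀⟩ :=
    Filter.eventually_atTop.mp (eventually_four_mul_logb_le_sqrt.and eventually_two_le_logb)
  refine ⟨n₀, fun n ε hn hεlow hεhigh m _ d T g hadv => ?_⟩
  obtain ⟨hlog, hL⟩ := hn₀ n hn
  have hε : 0 < ε := (Real.rpow_pos_of_pos two_pos _).trans_le hεlow
  have hn0 : (0 : ℝ) < n :=
    Nat.cast_pos.mpr (Nat.pos_of_ne_zero fun h => by norm_num [h] at hL)
  have hs : 8 ≤ Real.sqrt n := by linarith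
  refine rpow_three_halves_div_le_of_one_le hn0 hε (by linarith) hL
    (SSSQ.one_le_mul_sum_card_of_two_thirds_le g (by positivity) ?_ (by positivity) ?_ hadv)
  · rw [div_le_one (by linarith)]
    linarith
  · rw [div_le_iff₀ (by linarith)]
    linarith

theorem stmt10 (α : ℝ) (hα₁ : 1 / 2 < α) (hα₂ : α < 1) :
    ∃ n₀ : ℕ, ∀ (n : ℕ) (ε : ℝ), n₀ ≤ n →
      (2 : ℝ) ^ (-((2 * α - 1) * (n : ℝ) / 2)) ≤ ε → ε ≤ 1 / 6 →
      ∀ m : ℕ, m = ⌈2 * (1 - α) * (n : ℝ) + (1 - α) * Real.sqrt n * Real.logb 2 n⌉₊ →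
      ∀ (d : ℕ) (T : Fin d → Finset (Fin m)) (g : (Fin d → Fin m → Bool) → Bool),
        2 / 3 ≤ sssqAdv n m d T ε g →
        (n : ℝ) ^ ((3 : ℝ) / 2) /
            (ε * (Real.logb 2 n) ^ 3 * (Real.logb 2 ((n : ℝ) / ε)) ^ 2) ≤
          ∑ i : Fin d, ((T i).card : ℝ) :=
  stmt10_general α
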